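/- arXiv:1905.02322 — 3 statements merged into one kernel-verified Lean document; each statement's English description precedes it below -/
import Mathlib

section
/- Let Q = [a,b] × [c,d] with a ≤ b and c ≤ d, and let R = [l,r] × [β,τ] with β ≤ τ. Suppose l ≤ a, b ≤ r, and c ≤ τ ≤ d. Then R ∩ Q ≠ ∅, and moreover either both corners (a,c) and (b,c) of Q lie in R, or [a,b] × [β,τ] ⊆ R ∩ Q. -/
/-- A rectangle `R = [l,r] × [β,τ]` with `l ≤ a`, `b ≤ r` and `c ≤ τ ≤ d`
meets `Q = [a,b] × [c,d]`, and either contains the two bottom corners of `Q`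
or spans `Q` with `[a,b] × [β,τ] ⊆ R ∩ Q`. -/
theorem reported_rectangle_spans_or_contains_corners (a b c d l r β τ : ℝ)
    (hab : a ≤ b) (hcd : c ≤ d) (hβτ : β ≤ τ)
    (hl : l ≤ a) (hr : b ≤ r) (hcτ : c ≤ τ) (hτd : τ ≤ d) :
    ((Set.Icc l r ×ˢ Set.Icc β τ) ∩ (Set.Icc a b ×ˢ Set.Icc c d)).Nonempty ∧
    (((a, c) ∈ Set.Icc l r ×ˢ Set.Icc β τ ∧ (b, c) ∈ Set.Icc l r ×ˢ Set.Icc β τ) ∨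
      Set.Icc a b ×ˢ Set.Icc β τ ⊆
        (Set.Icc l r ×ˢ Set.Icc β τ) ∩ (Set.Icc a b ×ˢ Set.Icc c d)) := by
  constructor
  · exact ⟨(a, τ), ⟨⟨hl, hab.trans hr⟩, hβτ, le_rfl⟩, ⟨le_rfl, hab⟩, hcτ, hτd⟩
  · rcases le_or_gt β c with h | h
    · left
      constructor <;> simp [Set.mem_Icc] <;> constructor <;> constructor <;> linarith
    · right
      rintro ⟨x, y⟩ ⟨hx, hy⟩
      simp only [Set.mem_Icc] at hx hy
      refine ⟨⟨⟨?_, ?_⟩, ?_, ?_⟩, ⟨?_, ?_⟩, ?_, ?_⟩ <;> simp [Set.mem_Icc] <;> linarith [hx.1, hx.2, hy.1, hy.2]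
end

section
/- Let Q = [a,b] × [c,d] with a ≤ b and c ≤ d, and let R = [l,r] × [β,τ] with a ≤ l ≤ r ≤ b and c < β ≤ τ. Let S ⊆ R be a finite nonempty set of points in ℝ² with S ∩ Q ≠ ∅. Then every point p ∈ S whose y-coordinate is minimal among points of S lies in Q. -/
/-- For an internal rectangle `R` whose x-projection lies inside `[a,b]` and which lies
strictly above the bottom side of `Q`, if `R` contains a point of `Q` then every
bottommost point of the point set `S ⊆ R` lies in `Q`. -/
theorem bottommost_point_in_query (a b c d l r β τ : ℝ)
    (hab : a ≤ b) (hcd : c ≤ d)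
    (hal : a ≤ l) (hlr : l ≤ r) (hrb : r ≤ b) (hcβ : c < β) (hβτ : β ≤ τ)
    (S : Finset (ℝ × ℝ)) (hS : (S : Set (ℝ × ℝ)) ⊆ Set.Icc l r ×ˢ Set.Icc β τ)
    (hne : S.Nonempty)
    (hSQ : ∃ q ∈ S, q ∈ Set.Icc a b ×ˢ Set.Icc c d) :
    ∀ p ∈ S, (∀ q ∈ S, p.2 ≤ q.2) → p ∈ Set.Icc a b ×ˢ Set.Icc c d := by
  rintro p hp hmin
  obtain ⟨q, hq, hq1, hq2⟩ := hSQ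
  obtain ⟨⟨hp1l, hp1r⟩, hp2l, hp2r⟩ := hS hp
  exact ⟨⟨hal.trans hp1l, hp1r.trans hrb⟩, hcβ.le.trans hp2l, (hmin q hq).trans hq2.2⟩
end

section
/- Let Q = [a,b] × [c,d] ⊆ ℝ² be a square, i.e., b − a = d − c > 0, and let x₀ ∈ ℝ with a < x₀. Let C = [p, p+s] × [q, q+s] be a square with s > 0 and p ≥ x₀ + s. Then C contains at most one of the four corners (a,c), (a,d), (b,c), (b,d) of Q. -/
/-- If a query square `Q = [a,b] × [c,d]` crosses the vertical line `x = x₀` with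
`a < x₀`, then a square cell `C` whose horizontal distance from that line is at
least its own side length contains at most one corner of `Q`. -/
theorem far_square_contains_at_most_one_corner (a b c d x₀ p q s : ℝ)
    (hsquare : b - a = d - c) (hpos : 0 < b - a)
    (hax : a < x₀) (hs : 0 < s) (hp : x₀ + s ≤ p) :
    ∀ u v : ℝ × ℝ,
      u ∈ ({(a, c), (a, d), (b, c), (b, d)} : Set (ℝ × ℝ)) →
      v ∈ ({(a, c), (a, d), (b, c), (b, d)} : Set (ℝ × ℝ)) →
      u ∈ Set.Icc p (p + s) ×ˢ Set.Icc q (q + s) →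
      v ∈ Set.Icc p (p + s) ×ˢ Set.Icc q (q + s) →
      u = v := by
  have hap : a < p := by linarith
  intro u v hu hv huC hvC
  simp only [Set.mem_insert_iff, Set.mem_singleton_iff] at hu hv
  obtain ⟨⟨hu1, _⟩, hu3, hu4⟩ := huC
  obtain ⟨⟨hv1, _⟩, hv3, hv4⟩ := hvC
  rcases hu with rfl | rfl | rfl | rfl <;> rcases hv with rfl | rfl | rfl | rfl <;>
    simp_all <;> linarith
end
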